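/- arXiv:1409.7503 — 6 statements merged into one kernel-verified Lean document; each statement's English description precedes it below -/
import Mathlib

section
/- Let A be a Banach algebra with a left approximate identity and φ a character on A. If A is φ-biflat, then A is left φ-amenable. -/
set_option synthInstance.maxHeartbeats 1000000
set_option maxHeartbeats 1000000

open ContinuousLinearMap Filter Topology MeasureTheory

/-- Data realizing the projective tensor product `B ⊗̂ B` of a Banach-algebra-like space `B`
(with multiplication `mul`) as a Banach `B`-bimodule `X`: `tp a b` is the elementary tensor
`a ⊗ b`, `lsmul a x = a · x`, `rsmul a x = x · a`, and `pi` is the product morphism `π`. -/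
structure PTD (B : Type) [NormedAddCommGroup B] [NormedSpace ℂ B]
    (X : Type) [NormedAddCommGroup X] [NormedSpace ℂ X]
    (mul : B → B → B) where
  tp : B →L[ℂ] B →L[ℂ] X
  lsmul : B →L[ℂ] X →L[ℂ] X
  rsmul : B →L[ℂ] X →L[ℂ] X
  pi : X →L[ℂ] B
  lsmul_tp : ∀ a b c, lsmul a (tp b c) = tp (mul a b) c
  rsmul_tp : ∀ a b c, rsmul a (tp b c) = tp b (mul c a)
  pi_tp : ∀ a b, pi (tp a b) = mul a b
  norm_tp : ∀ a b, ‖tp a b‖ ≤ ‖a‖ * ‖b‖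
  dense_span : Dense (↑(Submodule.span ℂ (Set.range fun p : B × B => tp p.1 p.2)) : Set X)
  lift : ∀ (Y : Type) [NormedAddCommGroup Y] [NormedSpace ℂ Y] [CompleteSpace Y]
      (b : B →L[ℂ] B →L[ℂ] Y), ∃ T : X →L[ℂ] Y, ∀ a c, T (tp a c) = b a c

/-- The double adjoint (bitranspose) `T** : E** → F**` of a continuous linear map `T : E → F`;
explicitly, `dual2 T M g = M (g ∘ T)`. -/
noncomputable def dual2 {E F : Type} [NormedAddCommGroup E] [NormedSpace ℂ E]
    [NormedAddCommGroup F] [NormedSpace ℂ F] (T : E →L[ℂ] F) :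
    ((E →L[ℂ] ℂ) →L[ℂ] ℂ) →L[ℂ] ((F →L[ℂ] ℂ) →L[ℂ] ℂ) :=
  (ContinuousLinearMap.compL ℂ (F →L[ℂ] ℂ) (E →L[ℂ] ℂ) ℂ).flip
    ((ContinuousLinearMap.compL ℂ E F ℂ).flip T)

lemma dual2_apply {E F : Type} [NormedAddCommGroup E] [NormedSpace ℂ E]
    [NormedAddCommGroup F] [NormedSpace ℂ F] (T : E →L[ℂ] F)
    (M : (E →L[ℂ] ℂ) →L[ℂ] ℂ) (g : F →L[ℂ] ℂ) : dual2 T M g = M (g.comp T) := rfl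

lemma dual2_comp {E F G : Type} [NormedAddCommGroup E] [NormedSpace ℂ E]
    [NormedAddCommGroup F] [NormedSpace ℂ F] [NormedAddCommGroup G] [NormedSpace ℂ G]
    (S : F →L[ℂ] G) (T : E →L[ℂ] F) (M : (E →L[ℂ] ℂ) →L[ℂ] ℂ) :
    dual2 (S.comp T) M = dual2 S (dual2 T M) := by
  ext g; simp [dual2_apply, ContinuousLinearMap.comp_assoc]

lemma dual2_smul {E F : Type} [NormedAddCommGroup E] [NormedSpace ℂ E]
    [NormedAddCommGroup F] [NormedSpace ℂ F] (c : ℂ) (T : E →L[ℂ] F)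
    (M : (E →L[ℂ] ℂ) →L[ℂ] ℂ) : dual2 (c • T) M = c • dual2 T M := by
  ext g; simp [dual2_apply]

lemma clm_ext_on_tensors {A X Y : Type} [NormedAddCommGroup A] [NormedSpace ℂ A]
    [NormedAddCommGroup X] [NormedSpace ℂ X] [NormedAddCommGroup Y] [NormedSpace ℂ Y]
    {tp : A →L[ℂ] A →L[ℂ] X}
    (hd : Dense (↑(Submodule.span ℂ (Set.range fun p : A × A => tp p.1 p.2)) : Set X))
    {S T : X →L[ℂ] Y} (h : ∀ a c, S (tp a c) = T (tp a c)) : S = T := by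
  refine ContinuousLinearMap.ext_on hd ?_
  rintro x ⟨p, rfl⟩
  exact h p.1 p.2

/-- If a Banach algebra `A` with a left approximate identity is `φ`-biflat (there is a bounded
`A`-bimodule morphism `ρ : A → (A ⊗̂ A)**` with `φ̃ ∘ π** ∘ ρ = φ`), then `A` is left
`φ`-amenable: there is `m ∈ A**` with `a · m = φ(a) m` and `φ̃(m) = 1`. -/
theorem phiBiflat_leftPhiAmenable
    (A : Type) [NonUnitalNormedRing A] [NormedSpace ℂ A]
    [IsScalarTower ℂ A A] [SMulCommClass ℂ A A] [CompleteSpace A]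
    (φ : A →L[ℂ] ℂ) (hφmul : ∀ a b : A, φ (a * b) = φ a * φ b) (hφne : φ ≠ 0)
    (hlai : ∃ (ι : Type) (l : Filter ι), l.NeBot ∧ ∃ e : ι → A,
        ∀ a : A, Tendsto (fun i => e i * a) l (𝓝 a))
    (X : Type) [NormedAddCommGroup X] [NormedSpace ℂ X] [CompleteSpace X]
    (td : PTD A X (fun a b => a * b))
    (hbiflat : ∃ ρ : A →L[ℂ] ((X →L[ℂ] ℂ) →L[ℂ] ℂ),
      (∀ a b : A, ρ (a * b) = dual2 (td.lsmul a) (ρ b) ∧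
        ρ (a * b) = dual2 (td.rsmul b) (ρ a)) ∧
      ∀ a : A, dual2 td.pi (ρ a) φ = φ a) :
    ∃ m : (A →L[ℂ] ℂ) →L[ℂ] ℂ,
      (∀ a : A, dual2 (ContinuousLinearMap.mul ℂ A a) m = φ a • m) ∧ m φ = 1 := by
  obtain ⟨ρ, hmod, hpi⟩ := hbiflat
  obtain ⟨ι, l, hl, e, he⟩ := hlai
  obtain ⟨a₀, ha₀⟩ : ∃ a : A, φ a ≠ 0 := by
    by_contra h
    push_neg at h
    exact hφne (ContinuousLinearMap.ext h)
  set b₀ : A := (φ a₀)⁻¹ • a₀ with hb₀def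
  have hb₀ : φ b₀ = 1 := by
    simp [hb₀def, inv_mul_cancel₀ ha₀]
  obtain ⟨ψ, hψ'⟩ := td.lift A (ContinuousLinearMap.smulRightL ℂ A A φ)
  have hψ : ∀ a c, ψ (td.tp a c) = φ c • a := by
    intro a c
    simpa using hψ' a c
  -- key module identities for ψ
  have h1 : ∀ a : A, ψ.comp (td.lsmul a) = (ContinuousLinearMap.mul ℂ A a).comp ψ := by
    intro a
    refine clm_ext_on_tensors td.dense_span ?_
    intro b c
    simp only [ContinuousLinearMap.comp_apply, td.lsmul_tp, hψ,
      ContinuousLinearMap.mul_apply', mul_smul_comm]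
  have h2 : ∀ b : A, ψ.comp (td.rsmul b) = φ b • ψ := by
    intro b
    refine clm_ext_on_tensors td.dense_span ?_
    intro c d
    simp only [ContinuousLinearMap.comp_apply, td.rsmul_tp, hψ,
      ContinuousLinearMap.smul_apply, hφmul, smul_smul, mul_comm]
  have h3 : φ.comp ψ = φ.comp td.pi := by
    refine clm_ext_on_tensors td.dense_span ?_
    intro a c
    simp only [ContinuousLinearMap.comp_apply, hψ, td.pi_tp, ContinuousLinearMap.map_smul,
      hφmul, smul_eq_mul, mul_comm]
  set m : (A →L[ℂ] ℂ) →L[ℂ] ℂ := dual2 ψ (ρ b₀) with hm_def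
  -- n (e i * c) = φ c • n (e i)
  have hn : ∀ (i : ι) (c : A), dual2 ψ (ρ (e i * c)) = φ c • dual2 ψ (ρ (e i)) := by
    intro i c
    rw [(hmod (e i) c).2, ← dual2_comp, h2 c, dual2_smul]
  have tend : ∀ c : A, Tendsto (fun i => dual2 ψ (ρ (e i * c))) l (𝓝 (dual2 ψ (ρ c))) := by
    intro c
    exact (((dual2 ψ).continuous.comp ρ.continuous).tendsto c).comp (he c)
  have hme : Tendsto (fun i => dual2 ψ (ρ (e i))) l (𝓝 m) := by
    have := tend b₀
    simpa [hn, hb₀] using this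
  have key : ∀ c : A, dual2 ψ (ρ c) = φ c • m := by
    intro c
    refine tendsto_nhds_unique (tend c) ?_
    have : Tendsto (fun i => φ c • dual2 ψ (ρ (e i))) l (𝓝 (φ c • m)) :=
      hme.const_smul (φ c)
    simpa [hn] using this
  refine ⟨m, ?_, ?_⟩
  · intro a
    have : dual2 (ContinuousLinearMap.mul ℂ A a) m = dual2 ψ (ρ (a * b₀)) := by
      rw [hm_def, ← dual2_comp, ← h1 a, dual2_comp, (hmod a b₀).1]
    rw [this, key, hφmul, hb₀, mul_one]
  · have : m φ = dual2 td.pi (ρ b₀) φ := by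
      rw [hm_def, dual2_apply, dual2_apply, h3]
    rw [this, hpi b₀, hb₀]
end

section
/- Let A be an approximately biprojective Banach algebra with a left approximate identity and φ a character on A. Then A is left φ-contractible, i.e., there exists m ∈ A with am = φ(a)m for all a ∈ A and φ(m) = 1. -/
set_option synthInstance.maxHeartbeats 1000000
set_option maxHeartbeats 1000000

open ContinuousLinearMap Filter Topology MeasureTheory

/-- An approximately biprojective Banach algebra `A` with a left approximate identity is
left `φ`-contractible for every character `φ`: there is `m ∈ A` with `a m = φ(a) m`
for all `a` and `φ(m) = 1`. -/
theorem approxBiprojective_leftPhiContractible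
    (A : Type) [NonUnitalNormedRing A] [NormedSpace ℂ A]
    [IsScalarTower ℂ A A] [SMulCommClass ℂ A A] [CompleteSpace A]
    (φ : A →L[ℂ] ℂ) (hφmul : ∀ a b : A, φ (a * b) = φ a * φ b) (hφne : φ ≠ 0)
    (X : Type) [NormedAddCommGroup X] [NormedSpace ℂ X] [CompleteSpace X]
    (td : PTD A X (fun a b => a * b))
    (happrox : ∃ (ι : Type) (l : Filter ι), l.NeBot ∧ ∃ ρ : ι → (A →L[ℂ] X),
      (∀ i, ∀ a b : A, ρ i (a * b) = td.lsmul a (ρ i b) ∧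
        ρ i (a * b) = td.rsmul b (ρ i a)) ∧
      ∀ a : A, Tendsto (fun i => td.pi (ρ i a)) l (𝓝 a))
    (hlai : ∃ (ι : Type) (l : Filter ι), l.NeBot ∧ ∃ e : ι → A,
        ∀ a : A, Tendsto (fun i => e i * a) l (𝓝 a)) :
    ∃ m : A, (∀ a : A, a * m = φ a • m) ∧ φ m = 1 := by
  classical
  -- pick a0 with φ a0 = 1
  obtain ⟨x0, hx0⟩ : ∃ x : A, φ x ≠ 0 := by
    by_contra h
    push_neg at h
    exact hφne (by ext a; simpa using h a)
  obtain ⟨a0, ha0⟩ : ∃ a0 : A, φ a0 = 1 :=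
    ⟨(φ x0)⁻¹ • x0, by rw [_root_.map_smul, smul_eq_mul, inv_mul_cancel₀ hx0]⟩
  obtain ⟨ι, l, hl, ρ, hρ, hπ⟩ := happrox
  obtain ⟨ι', l', hl', e, he⟩ := hlai
  -- the lift ψ with ψ (a ⊗ c) = φ c • a
  obtain ⟨ψ, hψ⟩ := td.lift A (ContinuousLinearMap.smulRightL ℂ A A φ)
  have hψ' : ∀ a c : A, ψ (td.tp a c) = φ c • a := by
    intro a c; rw [hψ]; rfl
  -- ψ intertwines lsmul with left multiplication
  have hlsmul : ∀ (a : A) (x : X), ψ (td.lsmul a x) = a * ψ x := by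
    intro a
    have h : ψ.comp (td.lsmul a) = (ContinuousLinearMap.mul ℂ A a).comp ψ := by
      apply ContinuousLinearMap.ext_on td.dense_span
      rintro _ ⟨⟨p, q⟩, rfl⟩
      simp only [ContinuousLinearMap.comp_apply, td.lsmul_tp, hψ',
        ContinuousLinearMap.mul_apply']
      rw [mul_smul_comm]
    intro x
    exact DFunLike.congr_fun h x
  -- ψ intertwines rsmul with scalar action by φ
  have hrsmul : ∀ (a : A) (x : X), ψ (td.rsmul a x) = φ a • ψ x := by
    intro a
    have h : ψ.comp (td.rsmul a) = φ a • ψ := by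
      apply ContinuousLinearMap.ext_on td.dense_span
      rintro _ ⟨⟨p, q⟩, rfl⟩
      simp only [ContinuousLinearMap.comp_apply, td.rsmul_tp, hψ',
        ContinuousLinearMap.smul_apply]
      rw [hφmul, smul_smul, mul_comm]
    intro x
    exact DFunLike.congr_fun h x
  -- φ ∘ ψ = φ ∘ π
  have hphi : ∀ x : X, φ (ψ x) = φ (td.pi x) := by
    have h : φ.comp ψ = φ.comp td.pi := by
      apply ContinuousLinearMap.ext_on td.dense_span
      rintro _ ⟨⟨p, q⟩, rfl⟩
      simp only [ContinuousLinearMap.comp_apply, hψ', td.pi_tp, _root_.map_smul,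
        smul_eq_mul, hφmul]
      rw [mul_comm]
    intro x
    exact DFunLike.congr_fun h x
  -- key identity: a * ψ (ρ i c) = φ c • ψ (ρ i a)
  have hT : ∀ (i : ι) (a c : A), a * ψ (ρ i c) = φ c • ψ (ρ i a) := by
    intro i a c
    calc a * ψ (ρ i c) = ψ (td.lsmul a (ρ i c)) := (hlsmul a _).symm
      _ = ψ (ρ i (a * c)) := by rw [← (hρ i a c).1]
      _ = ψ (td.rsmul c (ρ i a)) := by rw [(hρ i a c).2]
      _ = φ c • ψ (ρ i a) := hrsmul c _
  -- ψ ∘ ρ i vanishes on ker φ (using the left approximate identity)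
  have hker : ∀ (i : ι) (c : A), φ c = 0 → ψ (ρ i c) = 0 := by
    intro i c hc
    have h0 : ∀ a : A, a * ψ (ρ i c) = 0 := by
      intro a; rw [hT i a c, hc, zero_smul]
    have h1 : Tendsto (fun j => e j * ψ (ρ i c)) l' (𝓝 (ψ (ρ i c))) := he _
    simp only [h0] at h1
    exact tendsto_nhds_unique h1 tendsto_const_nhds
  -- hence ψ (ρ i a) = φ a • ψ (ρ i a0)
  have hfact : ∀ (i : ι) (a : A), ψ (ρ i a) = φ a • ψ (ρ i a0) := by
    intro i a
    have hc : φ (a - φ a • a0) = 0 := by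
      rw [map_sub, _root_.map_smul, smul_eq_mul, ha0, mul_one, sub_self]
    have h := hker i _ hc
    rw [map_sub, _root_.map_smul, map_sub, _root_.map_smul, sub_eq_zero] at h
    exact h
  -- eigenvector property
  have heig : ∀ (i : ι) (a : A), a * ψ (ρ i a0) = φ a • ψ (ρ i a0) := by
    intro i a
    rw [hT i a a0, ha0, one_smul, hfact i a]
  -- φ (ψ (ρ i a0)) → 1
  have hconv : Tendsto (fun i => φ (ψ (ρ i a0))) l (𝓝 1) := by
    have h1 : Tendsto (fun i => φ (td.pi (ρ i a0))) l (𝓝 (φ a0)) :=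
      (φ.continuous.tendsto a0).comp (hπ a0)
    rw [ha0] at h1
    simpa only [hphi] using h1
  obtain ⟨i, hi⟩ : ∃ i : ι, φ (ψ (ρ i a0)) ≠ 0 :=
    (hconv.eventually_ne one_ne_zero).exists
  set u : A := ψ (ρ i a0) with hu
  refine ⟨(φ u)⁻¹ • u, ?_, ?_⟩
  · intro a
    rw [mul_smul_comm, heig i a, smul_comm]
  · rw [_root_.map_smul, smul_eq_mul, inv_mul_cancel₀ hi]
end

section
/- Let A be a Banach algebra, φ ∈ Δ(A), and suppose there exists a bounded net (n_α) in A⊗̂A such that a·n_α = n_α·a for all a ∈ A and φ∘π_A(n_α) → 1. If additionally there exists a₀ ∈ A with φ(a₀)=1, then there is m ∈ A** with a·m = φ(a)m for all a ∈ A and φ̃(m) = 1, i.e. A is left φ-amenable. -/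
set_option synthInstance.maxHeartbeats 1000000
set_option maxHeartbeats 1000000

open ContinuousLinearMap Filter Topology MeasureTheory

/-- If there is a bounded net `(n_α)` in `A ⊗̂ A` with `a · n_α = n_α · a` for all `a ∈ A`
and `φ(π(n_α)) → 1`, and some `a₀ ∈ A` with `φ(a₀) = 1`, then `A` is left `φ`-amenable:
there is `m ∈ A**` with `a · m = φ(a) m` for all `a ∈ A` and `φ̃(m) = 1`. -/
theorem leftPhiAmenable_of_central_net
    (A : Type) [NonUnitalNormedRing A] [NormedSpace ℂ A]
    [IsScalarTower ℂ A A] [SMulCommClass ℂ A A] [CompleteSpace A]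
    (φ : A →L[ℂ] ℂ) (hφmul : ∀ a b : A, φ (a * b) = φ a * φ b) (hφne : φ ≠ 0)
    (X : Type) [NormedAddCommGroup X] [NormedSpace ℂ X] [CompleteSpace X]
    (td : PTD A X (fun a b => a * b))
    (hnet : ∃ (ι : Type) (l : Filter ι), l.NeBot ∧ ∃ (n : ι → X) (C : ℝ),
      (∀ i, ‖n i‖ ≤ C) ∧
      (∀ i, ∀ a : A, td.lsmul a (n i) = td.rsmul a (n i)) ∧
      Tendsto (fun i => φ (td.pi (n i))) l (𝓝 1))
    (a₀ : A) (ha₀ : φ a₀ = 1) :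
    ∃ m : (A →L[ℂ] ℂ) →L[ℂ] ℂ,
      (∀ a : A, dual2 (ContinuousLinearMap.mul ℂ A a) m = φ a • m) ∧ m φ = 1 := by
  obtain ⟨ι, l, hl, n, C, hC, hcent, hlim⟩ := hnet
  -- The "left slice" map T : X → A with T (a ⊗ c) = φ(c) • a
  obtain ⟨T, hT⟩ := td.lift A
    (((ContinuousLinearMap.lsmul ℂ ℂ : ℂ →L[ℂ] A →L[ℂ] A).comp φ).flip)
  have hT' : ∀ a c : A, T (td.tp a c) = φ c • a := by
    intro a c; simpa using hT a c
  -- T intertwines lsmul with left multiplication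
  have hTl : ∀ (a : A) (x : X), T (td.lsmul a x) = a * T x := by
    intro a x
    have h : T.comp (td.lsmul a) = (ContinuousLinearMap.mul ℂ A a).comp T := by
      apply ContinuousLinearMap.ext_on td.dense_span
      rintro _ ⟨⟨b, c⟩, rfl⟩
      simp only [ContinuousLinearMap.comp_apply, td.lsmul_tp, hT',
        ContinuousLinearMap.mul_apply']
      rw [mul_smul_comm]
    exact DFunLike.congr_fun h x
  -- T intertwines rsmul with scalar multiplication by φ(a)
  have hTr : ∀ (a : A) (x : X), T (td.rsmul a x) = φ a • T x := by
    intro a x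
    have h : T.comp (td.rsmul a) = φ a • T := by
      apply ContinuousLinearMap.ext_on td.dense_span
      rintro _ ⟨⟨b, c⟩, rfl⟩
      simp only [ContinuousLinearMap.comp_apply, td.rsmul_tp, hT',
        ContinuousLinearMap.smul_apply]
      rw [hφmul, smul_smul, mul_comm]
    exact DFunLike.congr_fun h x
  -- φ ∘ T = φ ∘ π
  have hφT : ∀ x : X, φ (T x) = φ (td.pi x) := by
    intro x
    have h : φ.comp T = φ.comp td.pi := by
      apply ContinuousLinearMap.ext_on td.dense_span
      rintro _ ⟨⟨b, c⟩, rfl⟩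
      simp only [ContinuousLinearMap.comp_apply, hT', td.pi_tp, _root_.map_smul, hφmul]
      simp [mul_comm]
    exact DFunLike.congr_fun h x
  -- pick an index where φ(π(n i)) ≠ 0
  have hev : ∀ᶠ i in l, φ (td.pi (n i)) ≠ 0 := by
    have : ∀ᶠ i in l, φ (td.pi (n i)) ∈ {z : ℂ | z ≠ 0} :=
      hlim (IsOpen.mem_nhds isOpen_ne (by norm_num))
    exact this
  obtain ⟨i, hi⟩ := hev.exists
  set c : ℂ := φ (td.pi (n i)) with hc
  -- the element u with a • u = φ(a) u and φ(u) = 1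
  set u : A := c⁻¹ • T (n i) with hu
  have hφu : φ u = 1 := by
    rw [hu, _root_.map_smul, smul_eq_mul, hφT, ← hc, inv_mul_cancel₀ hi]
  have hau : ∀ a : A, a * u = φ a • u := by
    intro a
    rw [hu, mul_smul_comm, ← hTl, hcent i a, hTr, smul_comm]
  refine ⟨NormedSpace.inclusionInDoubleDual ℂ A u, ?_, ?_⟩
  · intro a
    ext g
    have h1 : dual2 (ContinuousLinearMap.mul ℂ A a)
        (NormedSpace.inclusionInDoubleDual ℂ A u) g = g (a * u) := rfl
    have h2 : (φ a • NormedSpace.inclusionInDoubleDual ℂ A u) g = φ a • g u := rfl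
    rw [h1, h2, hau, _root_.map_smul]
  · exact hφu
end

section
/- Let A, B be Banach algebras, φ ∈ Δ(A), ψ ∈ Δ(B). If A⊗̂B is left (φ⊗ψ)-contractible, then A is left φ-contractible. -/
set_option synthInstance.maxHeartbeats 1000000
set_option maxHeartbeats 1000000

open ContinuousLinearMap Filter Topology MeasureTheory

/-- If the projective tensor product `A ⊗̂ B` (realized as a Banach algebra `X`, with
character `χ = φ ⊗ ψ`) is left `(φ ⊗ ψ)`-contractible, then `A` is left `φ`-contractible. -/
theorem leftContractible_of_tensor_leftContractible
    (A : Type) [NonUnitalNormedRing A] [NormedSpace ℂ A]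
    [IsScalarTower ℂ A A] [SMulCommClass ℂ A A] [CompleteSpace A]
    (B : Type) [NonUnitalNormedRing B] [NormedSpace ℂ B]
    [IsScalarTower ℂ B B] [SMulCommClass ℂ B B] [CompleteSpace B]
    (φ : A →L[ℂ] ℂ) (hφmul : ∀ a b : A, φ (a * b) = φ a * φ b) (hφne : φ ≠ 0)
    (ψ : B →L[ℂ] ℂ) (hψmul : ∀ a b : B, ψ (a * b) = ψ a * ψ b) (hψne : ψ ≠ 0)
    (X : Type) [NonUnitalNormedRing X] [NormedSpace ℂ X]
    [IsScalarTower ℂ X X] [SMulCommClass ℂ X X] [CompleteSpace X]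
    (tp : A →L[ℂ] B →L[ℂ] X)
    (htp_mul : ∀ (a a' : A) (b b' : B), tp a b * tp a' b' = tp (a * a') (b * b'))
    (htp_norm : ∀ a b, ‖tp a b‖ ≤ ‖a‖ * ‖b‖)
    (htp_dense : Dense (↑(Submodule.span ℂ (Set.range fun p : A × B => tp p.1 p.2)) : Set X))
    (hlift : ∀ (Y : Type) [NormedAddCommGroup Y] [NormedSpace ℂ Y] [CompleteSpace Y]
      (b : A →L[ℂ] B →L[ℂ] Y), ∃ S : X →L[ℂ] Y, ∀ a c, S (tp a c) = b a c)
    (χ : X →L[ℂ] ℂ) (hχmul : ∀ x y : X, χ (x * y) = χ x * χ y)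
    (hχ_tp : ∀ (a : A) (b : B), χ (tp a b) = φ a * ψ b)
    (hcontr : ∃ m : X, (∀ x : X, x * m = χ x • m) ∧ χ m = 1) :
    ∃ n : A, (∀ a : A, a * n = φ a • n) ∧ φ n = 1 := by
  obtain ⟨m, hm, hχm⟩ := hcontr
  obtain ⟨b₁, hb₁⟩ : ∃ b, ψ b ≠ 0 := by
    by_contra h; push_neg at h
    exact hψne (by ext b; simpa using h b)
  set b₀ : B := (ψ b₁)⁻¹ • b₁ with hb₀def
  have hψb₀ : ψ b₀ = 1 := by
    simp [hb₀def, inv_mul_cancel₀ hb₁]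
  obtain ⟨S, hS⟩ := hlift A (ContinuousLinearMap.smulRightL ℂ B A ψ)
  have hS' : ∀ a c, S (tp a c) = ψ c • a := by
    intro a c; rw [hS]; rfl
  refine ⟨S m, ?_, ?_⟩
  · intro a
    have key : (ContinuousLinearMap.mul ℂ A a).comp S
        = S.comp (ContinuousLinearMap.mul ℂ X (tp a b₀)) := by
      refine ContinuousLinearMap.ext_on htp_dense ?_
      rintro _ ⟨⟨a', c'⟩, rfl⟩
      simp only [comp_apply, mul_apply', hS']
      rw [htp_mul, hS', hψmul, hψb₀, one_mul, mul_smul_comm]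
    have := congrArg (fun f => f m) key
    simp only [comp_apply, mul_apply'] at this
    rw [this, hm, S.map_smul, hχ_tp, hψb₀, mul_one]
  · have key : φ.comp S = χ := by
      refine ContinuousLinearMap.ext_on htp_dense ?_
      rintro _ ⟨⟨a', c'⟩, rfl⟩
      simp only [comp_apply, hS', φ.map_smul, hχ_tp, smul_eq_mul]
      ring
    have := congrArg (fun f => f m) key
    simp only [comp_apply] at this
    rw [this, hχm]
end

section
/- Let A be a Banach algebra, φ ∈ Δ(A), and suppose there exists a bounded net (γ_β) in A⊗̂A with a·γ_β − γ_β·a → 0 in norm and φ(π_A(γ_β)) → 1 for all a ∈ A. Then A is left φ-amenable. -/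
open Filter Topology

/-!
The slice map `T(a ⊗ b) = φ(b) a` is a left module map `A ⊗̂ A → A` which turns the right action
into multiplication by `φ`, and `φ ∘ T = φ ∘ π`. Hence `ν_β = T γ_β` is a bounded net in `A` with
`a ν_β - φ(a) ν_β = T(a · γ_β - γ_β · a) → 0` and `φ(ν_β) = φ(π γ_β) → 1`. A weak* cluster point
`m ∈ A**` of `(ν_β)`, taken along an ultrafilter finer than the net's filter, then satisfies
`a · m = φ(a) m` and `m(φ) = 1`.
-/

namespace PTD

variable {B X : Type} [NormedAddCommGroup B] [NormedSpace ℂ B]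
  [NormedAddCommGroup X] [NormedSpace ℂ X] {mul : B → B → B}

theorem ext_tp (td : PTD B X mul) {Y : Type} [NormedAddCommGroup Y] [NormedSpace ℂ Y]
    {S U : X →L[ℂ] Y} (h : ∀ a c, S (td.tp a c) = U (td.tp a c)) : S = U :=
  ContinuousLinearMap.ext_on td.dense_span (by rintro _ ⟨⟨a, c⟩, rfl⟩; exact h a c)

end PTD

section Slice

variable {A X : Type} [NonUnitalNormedRing A] [NormedSpace ℂ A]
  [NormedAddCommGroup X] [NormedSpace ℂ X]

theorem PTD.exists_slice [CompleteSpace A] (td : PTD A X (fun a b => a * b)) (φ : A →L[ℂ] ℂ) :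
    ∃ T : X →L[ℂ] A, ∀ a c, T (td.tp a c) = φ c • a :=
  td.lift A ((ContinuousLinearMap.lsmul ℂ ℂ : ℂ →L[ℂ] A →L[ℂ] A).comp φ).flip

variable {td : PTD A X (fun a b => a * b)} {φ : A →L[ℂ] ℂ} {T : X →L[ℂ] A}

theorem PTD.slice_lsmul [IsScalarTower ℂ A A] [SMulCommClass ℂ A A]
    (hT : ∀ a c, T (td.tp a c) = φ c • a) (a : A) (x : X) :
    T (td.lsmul a x) = a * T x := by
  have : T.comp (td.lsmul a) = (ContinuousLinearMap.mul ℂ A a).comp T :=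
    td.ext_tp fun b c => by simp [td.lsmul_tp, hT]
  exact DFunLike.congr_fun this x

theorem PTD.slice_rsmul (hφ : ∀ a b, φ (a * b) = φ a * φ b)
    (hT : ∀ a c, T (td.tp a c) = φ c • a) (a : A) (x : X) :
    T (td.rsmul a x) = φ a • T x := by
  have : T.comp (td.rsmul a) = φ a • T :=
    td.ext_tp fun b c => by simp [td.rsmul_tp, hT, hφ, mul_comm, mul_smul]
  exact DFunLike.congr_fun this x

theorem PTD.map_slice (hφ : ∀ a b, φ (a * b) = φ a * φ b)
    (hT : ∀ a c, T (td.tp a c) = φ c • a) (x : X) :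
    φ (T x) = φ (td.pi x) := by
  have : φ.comp T = φ.comp td.pi :=
    td.ext_tp fun b c => by simp [hT, td.pi_tp, hφ, mul_comm]
  exact DFunLike.congr_fun this x

end Slice

section Bidual

variable {𝕜 E ι : Type*} [NontriviallyNormedField 𝕜] [ProperSpace 𝕜]
  [NormedAddCommGroup E] [NormedSpace 𝕜 E]

theorem exists_bidual_tendsto_ultrafilter (u : Ultrafilter ι) {ν : ι → E} {M : ℝ}
    (hν : ∀ i, ‖ν i‖ ≤ M) :
    ∃ m : (E →L[𝕜] 𝕜) →L[𝕜] 𝕜, ∀ g, Tendsto (fun i => g (ν i)) u (𝓝 (m g)) := by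
  have hconv : ∀ g : E →L[𝕜] 𝕜, ∃ z, Tendsto (fun i => g (ν i)) u (𝓝 z) := fun g => by
    have hmem : ∀ i, g (ν i) ∈ Metric.closedBall (0 : 𝕜) (‖g‖ * M) := fun i => by
      simpa using g.le_opNorm_of_le (hν i)
    obtain ⟨z, -, hz⟩ := (isCompact_closedBall (0 : 𝕜) _).ultrafilter_le_nhds
      (u.map fun i => g (ν i)) (le_principal_iff.mpr (mem_map.mpr (univ_mem' hmem)))
    exact ⟨z, hz⟩
  choose mf hmf using hconv
  let m : (E →L[𝕜] 𝕜) →ₗ[𝕜] 𝕜 :=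
    { toFun := mf
      map_add' := fun g h =>
        tendsto_nhds_unique (hmf (g + h)) (by simpa using (hmf g).add (hmf h))
      map_smul' := fun c g =>
        tendsto_nhds_unique (hmf (c • g)) (by simpa using (hmf g).const_mul c) }
  refine ⟨m.mkContinuous M fun g => ?_, hmf⟩
  refine le_of_tendsto (hmf g).norm (Eventually.of_forall fun i => ?_)
  exact (g.le_opNorm_of_le (hν i)).trans_eq (mul_comm _ _)

end Bidual

theorem exists_leftPhiMean_of_bounded_net {A : Type} {ι : Type*} [NonUnitalNormedRing A]
    [NormedSpace ℂ A] [IsScalarTower ℂ A A] [SMulCommClass ℂ A A] (φ : A →L[ℂ] ℂ)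
    {l : Filter ι} [l.NeBot]
    (ν : ι → A) (M : ℝ) (hν : ∀ i, ‖ν i‖ ≤ M)
    (hcen : ∀ a, Tendsto (fun i => a * ν i - φ a • ν i) l (𝓝 0))
    (hφν : Tendsto (fun i => φ (ν i)) l (𝓝 1)) :
    ∃ m : (A →L[ℂ] ℂ) →L[ℂ] ℂ,
      (∀ a : A, dual2 (ContinuousLinearMap.mul ℂ A a) m = φ a • m) ∧ m φ = 1 := by
  obtain ⟨m, hm⟩ := exists_bidual_tendsto_ultrafilter (𝕜 := ℂ) (Ultrafilter.of l) hν
  have hle : (Ultrafilter.of l : Filter ι) ≤ l := Ultrafilter.of_le l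
  refine ⟨m, fun a => ?_, tendsto_nhds_unique (hm φ) (hφν.mono_left hle)⟩
  ext g
  have hsplit : ∀ i, g (a * ν i) = g (a * ν i - φ a • ν i) + φ a * g (ν i) := fun i => by
    simp
  have hlim : Tendsto (fun i => g (a * ν i)) (Ultrafilter.of l) (𝓝 (φ a * m g)) := by
    simpa only [hsplit, Function.comp_def, map_zero, zero_add] using
      ((g.continuous.tendsto 0).comp ((hcen a).mono_left hle)).add ((hm g).const_mul (φ a))
  exact tendsto_nhds_unique (hm _) hlim

theorem leftPhiAmenable_of_approx_central_net_general
    (A : Type) [NonUnitalNormedRing A] [NormedSpace ℂ A]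
    [IsScalarTower ℂ A A] [SMulCommClass ℂ A A] [CompleteSpace A]
    (φ : A →L[ℂ] ℂ) (hφmul : ∀ a b : A, φ (a * b) = φ a * φ b)
    (X : Type) [NormedAddCommGroup X] [NormedSpace ℂ X]
    (td : PTD A X (fun a b => a * b))
    (hnet : ∃ (ι : Type) (l : Filter ι), l.NeBot ∧ ∃ (γ : ι → X) (C : ℝ),
      (∀ i, ‖γ i‖ ≤ C) ∧
      (∀ a : A, Tendsto (fun i => td.lsmul a (γ i) - td.rsmul a (γ i)) l (𝓝 0)) ∧
      Tendsto (fun i => φ (td.pi (γ i))) l (𝓝 1)) :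
    ∃ m : (A →L[ℂ] ℂ) →L[ℂ] ℂ,
      (∀ a : A, dual2 (ContinuousLinearMap.mul ℂ A a) m = φ a • m) ∧ m φ = 1 := by
  obtain ⟨ι, l, _, γ, C, hγ, hcen, hπ⟩ := hnet
  obtain ⟨T, hT⟩ := td.exists_slice φ
  refine exists_leftPhiMean_of_bounded_net φ (fun i => T (γ i)) (‖T‖ * C)
    (fun i => T.le_opNorm_of_le (hγ i))
    (fun a => ?_) (by simpa only [PTD.map_slice hφmul hT] using hπ)
  have := (T.continuous.tendsto 0).comp (hcen a)
  simpa [Function.comp_def, PTD.slice_lsmul hT, PTD.slice_rsmul hφmul hT] using this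

/-- If there is a bounded net `(γ_β)` in `A ⊗̂ A` with `a · γ_β − γ_β · a → 0` in norm for
every `a ∈ A` and `φ(π(γ_β)) → 1`, then `A` is left `φ`-amenable: there is `m ∈ A**` with
`a · m = φ(a) m` for all `a ∈ A` and `φ̃(m) = 1`. -/
theorem leftPhiAmenable_of_approx_central_net
    (A : Type) [NonUnitalNormedRing A] [NormedSpace ℂ A]
    [IsScalarTower ℂ A A] [SMulCommClass ℂ A A] [CompleteSpace A]
    (φ : A →L[ℂ] ℂ) (hφmul : ∀ a b : A, φ (a * b) = φ a * φ b) (hφne : φ ≠ 0)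
    (X : Type) [NormedAddCommGroup X] [NormedSpace ℂ X] [CompleteSpace X]
    (td : PTD A X (fun a b => a * b))
    (hnet : ∃ (ι : Type) (l : Filter ι), l.NeBot ∧ ∃ (γ : ι → X) (C : ℝ),
      (∀ i, ‖γ i‖ ≤ C) ∧
      (∀ a : A, Tendsto (fun i => td.lsmul a (γ i) - td.rsmul a (γ i)) l (𝓝 0)) ∧
      Tendsto (fun i => φ (td.pi (γ i))) l (𝓝 1)) :
    ∃ m : (A →L[ℂ] ℂ) →L[ℂ] ℂ,
      (∀ a : A, dual2 (ContinuousLinearMap.mul ℂ A a) m = φ a • m) ∧ m φ = 1 :=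
  leftPhiAmenable_of_approx_central_net_general A φ hφmul X td hnet
end

section
/- Let A be a φ-inner amenable Banach algebra, φ ∈ Δ(A). If A** (with the first Arens product) is φ̃-biflat, then A is left φ-amenable. -/
set_option synthInstance.maxHeartbeats 1000000
set_option maxHeartbeats 1000000

open ContinuousLinearMap Filter Topology MeasureTheory

variable (A : Type) [NonUnitalNormedRing A] [NormedSpace ℂ A]
    [IsScalarTower ℂ A A] [SMulCommClass ℂ A A]

/-- `f ↦ (a ↦ f · a)` where `(f · a)(b) = f (a * b)`. -/
noncomputable def arensAux : (A →L[ℂ] ℂ) →L[ℂ] (A →L[ℂ] (A →L[ℂ] ℂ)) :=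
  ((ContinuousLinearMap.compL ℂ A (A →L[ℂ] A) (A →L[ℂ] ℂ)).flip
      (ContinuousLinearMap.mul ℂ A)).comp (ContinuousLinearMap.compL ℂ A A ℂ)

/-- The first Arens product `F □ G` on the bidual `A**`:
`(F □ G)(f) = F (G · f)` where `(G · f)(a) = G (f · a)` and `(f · a)(b) = f (a * b)`. -/
noncomputable def arens (F G : (A →L[ℂ] ℂ) →L[ℂ] ℂ) : (A →L[ℂ] ℂ) →L[ℂ] ℂ :=
  F.comp (((ContinuousLinearMap.compL ℂ A (A →L[ℂ] ℂ) ℂ) G).comp (arensAux A))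

/-- If `A` is `φ`-inner amenable and its bidual `A**` (with the first Arens product) is
`φ̃`-biflat — there is a bounded `A**`-bimodule morphism `ρ : A** → (A** ⊗̂ A**)**` with
`φ̃̃ ∘ π** ∘ ρ = φ̃` — then `A` is left `φ`-amenable. -/
theorem leftPhiAmenable_of_bidual_biflat
    (A : Type) [NonUnitalNormedRing A] [NormedSpace ℂ A]
    [IsScalarTower ℂ A A] [SMulCommClass ℂ A A] [CompleteSpace A]
    (φ : A →L[ℂ] ℂ) (hφmul : ∀ a b : A, φ (a * b) = φ a * φ b) (hφne : φ ≠ 0)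
    (hinner : ∃ m : (A →L[ℂ] ℂ) →L[ℂ] ℂ,
      (∀ (a : A) (f : A →L[ℂ] ℂ),
        m (f.comp (ContinuousLinearMap.mul ℂ A a))
          = m (f.comp ((ContinuousLinearMap.mul ℂ A).flip a))) ∧ m φ = 1)
    (X : Type) [NormedAddCommGroup X] [NormedSpace ℂ X] [CompleteSpace X]
    (td : PTD ((A →L[ℂ] ℂ) →L[ℂ] ℂ) X (arens A))
    (hbiflat : ∃ ρ : ((A →L[ℂ] ℂ) →L[ℂ] ℂ) →L[ℂ] ((X →L[ℂ] ℂ) →L[ℂ] ℂ),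
      (∀ F G : (A →L[ℂ] ℂ) →L[ℂ] ℂ,
        ρ (arens A F G) = dual2 (td.lsmul F) (ρ G) ∧
        ρ (arens A F G) = dual2 (td.rsmul G) (ρ F)) ∧
      ∀ F : (A →L[ℂ] ℂ) →L[ℂ] ℂ,
        dual2 td.pi (ρ F) (ContinuousLinearMap.apply ℂ ℂ φ) = F φ) :
    ∃ M : (A →L[ℂ] ℂ) →L[ℂ] ℂ,
      (∀ a : A, dual2 (ContinuousLinearMap.mul ℂ A a) M = φ a • M) ∧ M φ = 1 := by
  classical
  obtain ⟨m, hm1, hm2⟩ := hinner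
  obtain ⟨ρ, hρ, hπ⟩ := hbiflat
  -- density extension principle
  have ext_td : ∀ (S₁ S₂ : X →L[ℂ] ℂ),
      (∀ F G : (A →L[ℂ] ℂ) →L[ℂ] ℂ, S₁ (td.tp F G) = S₂ (td.tp F G)) → S₁ = S₂ := by
    intro S₁ S₂ h
    refine ContinuousLinearMap.ext_on td.dense_span ?_
    rintro _ ⟨⟨F, G⟩, rfl⟩
    exact h F G
  -- basic computations
  have hφa : ∀ a : A, φ.comp (ContinuousLinearMap.mul ℂ A a) = φ a • φ := by
    intro a; ext b; simp [hφmul]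
  have harensL : ∀ (a : A) (F : (A →L[ℂ] ℂ) →L[ℂ] ℂ) (f : A →L[ℂ] ℂ),
      arens A (ContinuousLinearMap.apply ℂ ℂ a) F f
        = F (f.comp (ContinuousLinearMap.mul ℂ A a)) := fun a F f => rfl
  have harensR : ∀ (a : A) (F : (A →L[ℂ] ℂ) →L[ℂ] ℂ) (f : A →L[ℂ] ℂ),
      arens A F (ContinuousLinearMap.apply ℂ ℂ a) f
        = F (f.comp ((ContinuousLinearMap.mul ℂ A).flip a)) := by
    intro a F f
    show F ((ContinuousLinearMap.apply ℂ ℂ a).comp (arensAux A f)) = _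
    congr 1
  -- inner amenability: ι a □ m = m □ ι a
  have hinn : ∀ a : A,
      arens A (ContinuousLinearMap.apply ℂ ℂ a) m
        = arens A m (ContinuousLinearMap.apply ℂ ℂ a) := by
    intro a
    ext f
    rw [harensL, harensR]
    exact hm1 a f
  have hmod : ∀ a : A,
      dual2 (td.lsmul (ContinuousLinearMap.apply ℂ ℂ a)) (ρ m)
        = dual2 (td.rsmul (ContinuousLinearMap.apply ℂ ℂ a)) (ρ m) := by
    intro a
    calc dual2 (td.lsmul (ContinuousLinearMap.apply ℂ ℂ a)) (ρ m)
        = ρ (arens A (ContinuousLinearMap.apply ℂ ℂ a) m) :=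
          ((hρ (ContinuousLinearMap.apply ℂ ℂ a) m).1).symm
      _ = ρ (arens A m (ContinuousLinearMap.apply ℂ ℂ a)) := by rw [hinn]
      _ = dual2 (td.rsmul (ContinuousLinearMap.apply ℂ ℂ a)) (ρ m) :=
          (hρ m (ContinuousLinearMap.apply ℂ ℂ a)).2
  -- the lifted map T : X →L A** with T (F ⊗ G) = G φ • F
  obtain ⟨T, hT⟩ := td.lift ((A →L[ℂ] ℂ) →L[ℂ] ℂ)
    (ContinuousLinearMap.smulRightL ℂ ((A →L[ℂ] ℂ) →L[ℂ] ℂ) ((A →L[ℂ] ℂ) →L[ℂ] ℂ)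
      (ContinuousLinearMap.apply ℂ ℂ φ))
  have hT' : ∀ F G : (A →L[ℂ] ℂ) →L[ℂ] ℂ, T (td.tp F G) = G φ • F := by
    intro F G; rw [hT]; rfl
  refine ⟨(ρ m).comp ((ContinuousLinearMap.precomp ℂ T).comp
    (ContinuousLinearMap.apply ℂ ℂ (E := A →L[ℂ] ℂ))), ?_, ?_⟩
  · intro a
    ext f
    show ρ m ((ContinuousLinearMap.apply ℂ ℂ
        (f.comp (ContinuousLinearMap.mul ℂ A a))).comp T)
      = φ a * ρ m ((ContinuousLinearMap.apply ℂ ℂ f).comp T)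
    have claimA : (ContinuousLinearMap.apply ℂ ℂ
        (f.comp (ContinuousLinearMap.mul ℂ A a))).comp T
        = ((ContinuousLinearMap.apply ℂ ℂ f).comp T).comp
          (td.lsmul (ContinuousLinearMap.apply ℂ ℂ a)) := by
      apply ext_td
      intro F G
      have h1 : (ContinuousLinearMap.apply ℂ ℂ
          (f.comp (ContinuousLinearMap.mul ℂ A a))).comp T (td.tp F G)
          = G φ • F (f.comp (ContinuousLinearMap.mul ℂ A a)) := by
        show ContinuousLinearMap.apply ℂ ℂ
            (f.comp (ContinuousLinearMap.mul ℂ A a)) (T (td.tp F G)) = _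
        rw [hT']
        rfl
      have h2 : ((ContinuousLinearMap.apply ℂ ℂ f).comp T).comp
            (td.lsmul (ContinuousLinearMap.apply ℂ ℂ a)) (td.tp F G)
          = G φ • (arens A (ContinuousLinearMap.apply ℂ ℂ a) F) f := by
        show ContinuousLinearMap.apply ℂ ℂ f
            (T (td.lsmul (ContinuousLinearMap.apply ℂ ℂ a) (td.tp F G))) = _
        rw [td.lsmul_tp, hT']
        rfl
      rw [h1, h2, harensL]
    have claimB : ((ContinuousLinearMap.apply ℂ ℂ f).comp T).comp
          (td.rsmul (ContinuousLinearMap.apply ℂ ℂ a))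
        = φ a • ((ContinuousLinearMap.apply ℂ ℂ f).comp T) := by
      apply ext_td
      intro F G
      have h1 : ((ContinuousLinearMap.apply ℂ ℂ f).comp T).comp
            (td.rsmul (ContinuousLinearMap.apply ℂ ℂ a)) (td.tp F G)
          = (arens A G (ContinuousLinearMap.apply ℂ ℂ a)) φ * F f := by
        show ContinuousLinearMap.apply ℂ ℂ f
            (T (td.rsmul (ContinuousLinearMap.apply ℂ ℂ a) (td.tp F G))) = _
        rw [td.rsmul_tp, hT']
        rfl
      have h2 : (arens A G (ContinuousLinearMap.apply ℂ ℂ a)) φ = φ a * G φ := by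
        rw [harensR]
        have hφa' : φ.comp ((ContinuousLinearMap.mul ℂ A).flip a) = φ a • φ := by
          ext b
          show φ (b * a) = φ a * φ b
          rw [hφmul]; ring
        rw [hφa']
        simp
      have h3 : (φ a • ((ContinuousLinearMap.apply ℂ ℂ f).comp T)) (td.tp F G)
          = φ a * (G φ * F f) := by
        show φ a * ContinuousLinearMap.apply ℂ ℂ f (T (td.tp F G)) = _
        rw [hT']
        rfl
      rw [h1, h2, h3]; ring
    calc ρ m ((ContinuousLinearMap.apply ℂ ℂ
            (f.comp (ContinuousLinearMap.mul ℂ A a))).comp T)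
        = ρ m (((ContinuousLinearMap.apply ℂ ℂ f).comp T).comp
            (td.lsmul (ContinuousLinearMap.apply ℂ ℂ a))) := by rw [claimA]
      _ = dual2 (td.lsmul (ContinuousLinearMap.apply ℂ ℂ a)) (ρ m)
            ((ContinuousLinearMap.apply ℂ ℂ f).comp T) := rfl
      _ = dual2 (td.rsmul (ContinuousLinearMap.apply ℂ ℂ a)) (ρ m)
            ((ContinuousLinearMap.apply ℂ ℂ f).comp T) := by rw [hmod]
      _ = ρ m (((ContinuousLinearMap.apply ℂ ℂ f).comp T).comp
            (td.rsmul (ContinuousLinearMap.apply ℂ ℂ a))) := rfl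
      _ = ρ m (φ a • ((ContinuousLinearMap.apply ℂ ℂ f).comp T)) := by rw [claimB]
      _ = φ a * ρ m ((ContinuousLinearMap.apply ℂ ℂ f).comp T) := by
          rw [_root_.map_smul]; rfl
  · -- evaluation at φ gives 1
    show ρ m ((ContinuousLinearMap.apply ℂ ℂ φ).comp T) = 1
    have claimC : (ContinuousLinearMap.apply ℂ ℂ φ).comp T
        = (ContinuousLinearMap.apply ℂ ℂ φ).comp td.pi := by
      apply ext_td
      intro F G
      have h1 : (ContinuousLinearMap.apply ℂ ℂ φ).comp T (td.tp F G)
          = G φ * F φ := by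
        show ContinuousLinearMap.apply ℂ ℂ φ (T (td.tp F G)) = _
        rw [hT']
        rfl
      have h2 : (ContinuousLinearMap.apply ℂ ℂ φ).comp td.pi (td.tp F G)
          = F (G.comp (arensAux A φ)) := by
        show (td.pi (td.tp F G)) φ = _
        rw [td.pi_tp]
        rfl
      have h3 : G.comp (arensAux A φ) = G φ • φ := by
        ext a
        show G (φ.comp (ContinuousLinearMap.mul ℂ A a)) = G φ * φ a
        rw [hφa]
        simp [mul_comm]
      rw [h1, h2, h3]
      simp
    rw [claimC]
    calc ρ m ((ContinuousLinearMap.apply ℂ ℂ φ).comp td.pi)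
        = dual2 td.pi (ρ m) (ContinuousLinearMap.apply ℂ ℂ φ) := rfl
      _ = m φ := hπ m
      _ = 1 := hm2
end
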